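/- Let G ∈ B^+(H). For every X ∈ B^+(H): (1) τ_G(X):G = 0; (2) τ_G(X) ≤ X, with τ_G(X) = X if and only if ran X^{1/2} ∩ ran G^{1/2} = {0}; (3) τ_G(τ_G(X)) = τ_G(X); (4) τ_G(μ_G(X)) = τ_G(X). -/

import Mathlib

/-!
The iterates `X_n = μ_G^[n](X)` decrease in the Loewner order, so their strong limit `L` is
positive and lies below every `X_n`. The quadratic forms of the decrements
`X_n : G = X_n - X_{n+1}` tend to `0`, and since `L ≤ X_n`, a near-optimal splitting `h = f + g`
for `X_n : G` is also one for `L : G`; hence `L : G = 0`. An operator `Y` with `Y : G = 0` is a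
fixed point of `μ_G`, and the orbit of `μ_G(X)` is the shifted orbit of `X`, so uniqueness of
`μ_G`-orbits gives (3), (4) and `τ_G(X) = X ↔ X : G = 0`. Finally `X : G = 0` iff
`ran X^{1/2} ∩ ran G^{1/2} = {0}`: one direction is Cauchy–Schwarz, the other says that
`(0, G^{1/2} h)` lies in the closure of `{(X^{1/2} f, G^{1/2} f)}` in `H ⊕ H`.
-/

open Filter Topology

variable {H : Type*} [NormedAddCommGroup H] [InnerProductSpace ℂ H] [CompleteSpace H]

/-- `P` is the parallel sum `X : G` of `X` and `G`. -/
def IsParallelSum (X G P : H →L[ℂ] H) : Prop :=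
  P.IsPositive ∧ ∀ h : H,
    IsGLB {r : ℝ | ∃ f g : H, f + g = h ∧
        r = (inner ℂ (X f) f : ℂ).re + (inner ℂ (G g) g : ℂ).re}
      ((inner ℂ (P h) h : ℂ).re)

/-- `S` is the (unique) nonnegative square root of `X`. -/
def IsSqrtOf (S X : H →L[ℂ] H) : Prop := S.IsPositive ∧ S * S = X

/-- The orbit of `F 0` under the map `μ_G : X ↦ X - X:G`. -/
def IsMuOrbit (G : H →L[ℂ] H) (F : ℕ → H →L[ℂ] H) : Prop :=
  ∀ n : ℕ, ∃ P : H →L[ℂ] H, IsParallelSum (F n) G P ∧ F (n + 1) = F n - P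

/-- `L = τ_G(X)` : the strong limit of the iterates `μ_G^[n](X)`. -/
def IsTau (G X L : H →L[ℂ] H) : Prop :=
  ∃ F : ℕ → H →L[ℂ] H, F 0 = X ∧ IsMuOrbit G F ∧
    ∀ x : H, Tendsto (fun n => F n x) atTop (𝓝 (L x))

/-- `P` is the orthogonal projection of `H` onto the subspace `M`. -/
def IsOrthProjOnto (M : Submodule ℂ H) (P : H →L[ℂ] H) : Prop :=
  ∀ x : H, P x ∈ M ∧ x - P x ∈ Mᗮ

namespace ContinuousLinearMap

variable {𝕜 E : Type*} [RCLike 𝕜] [NormedAddCommGroup E] [InnerProductSpace 𝕜 E]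

theorem reApplyInnerSelf_sub (S T : E →L[𝕜] E) (x : E) :
    (S - T).reApplyInnerSelf x = S.reApplyInnerSelf x - T.reApplyInnerSelf x := by
  simp [reApplyInnerSelf_apply, inner_sub_left]

theorem reApplyInnerSelf_le_of_le {S T : E →L[𝕜] E} (h : S ≤ T) (x : E) :
    S.reApplyInnerSelf x ≤ T.reApplyInnerSelf x :=
  sub_nonneg.1 <| reApplyInnerSelf_sub T S x ▸ h.2 x

theorem le_of_reApplyInnerSelf_le {S T : E →L[𝕜] E} (hS : S.IsSymmetric) (hT : T.IsSymmetric)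
    (h : ∀ x, S.reApplyInnerSelf x ≤ T.reApplyInnerSelf x) : S ≤ T :=
  ⟨hT.sub hS, fun x => reApplyInnerSelf_sub T S x ▸ sub_nonneg.2 (h x)⟩

theorem tendsto_reApplyInnerSelf {ι : Type*} {l : Filter ι} {T : ι → E →L[𝕜] E}
    {L : E →L[𝕜] E} (hT : ∀ x, Tendsto (T · x) l (𝓝 (L x))) (x : E) :
    Tendsto (fun i => (T i).reApplyInnerSelf x) l (𝓝 (L.reApplyInnerSelf x)) :=
  (RCLike.continuous_re.tendsto _).comp ((hT x).inner tendsto_const_nhds)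

theorem isPositive_of_tendsto {ι : Type*} {l : Filter ι} [l.NeBot] {T : ι → E →L[𝕜] E}
    {L : E →L[𝕜] E} (hpos : ∀ᶠ i in l, (T i).IsPositive)
    (hT : ∀ x, Tendsto (T · x) l (𝓝 (L x))) : L.IsPositive := by
  refine ⟨fun x y => tendsto_nhds_unique ((hT x).inner tendsto_const_nhds) ?_, fun x =>
    ge_of_tendsto (tendsto_reApplyInnerSelf hT x) (hpos.mono fun i hi => hi.2 x)⟩
  refine (tendsto_const_nhds.inner (hT y)).congr' (hpos.mono fun i hi => ?_)
  exact (hi.inner_left_eq_inner_right x y).symm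

theorem le_of_antitone_of_tendsto {ι : Type*} [SemilatticeSup ι] [Nonempty ι]
    {T : ι → E →L[𝕜] E} {L : E →L[𝕜] E} (hanti : Antitone T)
    (hT : ∀ x, Tendsto (T · x) atTop (𝓝 (L x))) (i : ι) : L ≤ T i :=
  isPositive_of_tendsto (eventually_ge_atTop i |>.mono fun _ hj => hanti hj)
    fun x => tendsto_const_nhds.sub (hT x)

end ContinuousLinearMap

section RangeIntersection

open RCLike

variable {𝕜 E : Type*} [RCLike 𝕜] [NormedAddCommGroup E] [InnerProductSpace 𝕜 E]
  {A B : E →L[𝕜] E}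

local notation "⟪" x ", " y "⟫" => inner 𝕜 x y

theorem range_inter_range_eq_zero_of_forall_exists_lt (hA : A.IsSymmetric) (hB : B.IsSymmetric)
    (hAB : ∀ h : E, ∀ ε > 0, ∃ f g, f + g = h ∧ ‖A f‖ ^ 2 + ‖B g‖ ^ 2 < ε) :
    Set.range A ∩ Set.range B = {0} := by
  refine Set.eq_singleton_iff_unique_mem.2 ⟨⟨⟨0, map_zero A⟩, 0, map_zero B⟩, ?_⟩
  rintro _ ⟨⟨a, rfl⟩, b, hb⟩
  set c := ‖a‖ ^ 2 + ‖b‖ ^ 2 + 1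
  have key : ∀ f g, f + g = A a → ‖A a‖ ^ 4 ≤ c * (‖A f‖ ^ 2 + ‖B g‖ ^ 2) := by
    intro f g hfg
    have hsq : ‖A a‖ ^ 2 ≤ ‖a‖ * ‖A f‖ + ‖b‖ * ‖B g‖ :=
      calc ‖A a‖ ^ 2 = re ⟪A a, f⟫ + re ⟪B b, g⟫ := by
            rw [hb, ← map_add, ← inner_add_right, hfg, inner_self_eq_norm_sq]
        _ = re ⟪a, A f⟫ + re ⟪b, B g⟫ := congrArg₂ (re · + re ·) (hA a f) (hB b g)
        _ ≤ ‖a‖ * ‖A f‖ + ‖b‖ * ‖B g‖ := add_le_add (re_inner_le_norm _ _) (re_inner_le_norm _ _)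
    have hsq' := pow_le_pow_left₀ (sq_nonneg ‖A a‖) hsq 2
    nlinarith [sq_nonneg (‖a‖ * ‖B g‖ - ‖b‖ * ‖A f‖), sq_nonneg ‖A f‖, sq_nonneg ‖B g‖]
  by_contra hAa
  obtain ⟨f, g, hfg, hlt⟩ := hAB (A a) (‖A a‖ ^ 4 / c) (by positivity [norm_pos_iff.2 hAa])
  rw [lt_div_iff₀ (by positivity)] at hlt
  linarith [key f g hfg]

theorem exists_add_eq_and_norm_sq_add_norm_sq_lt [CompleteSpace E] (hA : A.IsSymmetric)
    (hB : B.IsSymmetric) (hAB : Set.range A ∩ Set.range B = {0}) (h : E) {ε : ℝ} (hε : 0 < ε) :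
    ∃ f g, f + g = h ∧ ‖A f‖ ^ 2 + ‖B g‖ ^ 2 < ε := by
  have hA' : ∀ x y, ⟪A x, y⟫ = ⟪x, A y⟫ := hA
  have hB' : ∀ x y, ⟪B x, y⟫ = ⟪x, B y⟫ := hB
  let Φ : E →ₗ[𝕜] WithLp 2 (E × E) :=
    (WithLp.linearEquiv 2 𝕜 (E × E)).symm.toLinearMap ∘ₗ (A : E →ₗ[𝕜] E).prod B
  let p : WithLp 2 (E × E) := WithLp.toLp 2 (0, B h)
  -- `(u, v) ⊥ range Φ` means `A u + B v = 0`, and then `B v ∈ range A ∩ range B` vanishes.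
  have hp : p ∈ (LinearMap.range Φ)ᗮᗮ := by
    refine (Submodule.mem_orthogonal _ p).2 fun y hy => ?_
    have hy' : A y.fst + B y.snd = 0 := by
      set w := A y.fst + B y.snd
      refine (inner_self_eq_zero (𝕜 := 𝕜)).1 ?_
      calc ⟪w, w⟫ = ⟪Φ w, y⟫ := by
            rw [inner_add_right, ← hA', ← hB']
            rfl
        _ = 0 := (Submodule.mem_orthogonal _ y).1 hy _ (LinearMap.mem_range_self Φ w)
    have hBy : B y.snd = 0 := by
      have hmem : B y.snd ∈ Set.range A ∩ Set.range B :=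
        ⟨⟨-y.fst, by rw [map_neg, eq_neg_iff_add_eq_zero.2 hy', neg_neg]⟩, y.snd, rfl⟩
      rwa [hAB] at hmem
    simp [p, WithLp.prod_inner_apply, ← hB', hBy]
  rw [Submodule.orthogonal_orthogonal_eq_closure] at hp
  obtain ⟨_, ⟨f, rfl⟩, hdist⟩ :=
    Metric.mem_closure_iff.1 hp (√ε) (Real.sqrt_pos.2 hε)
  refine ⟨f, h - f, add_sub_cancel f h, ?_⟩
  calc ‖A f‖ ^ 2 + ‖B (h - f)‖ ^ 2 = dist p (Φ f) ^ 2 := by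
        rw [dist_eq_norm, WithLp.prod_norm_sq_eq_of_L2, map_sub]
        simp [p, Φ]
    _ < √ε ^ 2 := pow_lt_pow_left₀ hdist dist_nonneg two_ne_zero
    _ = ε := Real.sq_sqrt hε.le

end RangeIntersection

section ParallelSum

open ContinuousLinearMap

variable {E : Type*} [NormedAddCommGroup E] [InnerProductSpace ℂ E] {X G P S : E →L[ℂ] E}

theorem IsParallelSum.reApplyInnerSelf_le (hP : IsParallelSum X G P) (x : E) :
    P.reApplyInnerSelf x ≤ X.reApplyInnerSelf x :=
  (hP.2 x).1 ⟨x, 0, add_zero x, by simp [reApplyInnerSelf_apply]⟩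

theorem IsParallelSum.le (hX : X.IsSymmetric) (hP : IsParallelSum X G P) : P ≤ X :=
  le_of_reApplyInnerSelf_le hP.1.1 hX hP.reApplyInnerSelf_le

theorem IsParallelSum.unique {P' : E →L[ℂ] E} (hP : IsParallelSum X G P)
    (hP' : IsParallelSum X G P') : P = P' :=
  le_antisymm (le_of_reApplyInnerSelf_le hP.1.1 hP'.1.1 fun x => ((hP.2 x).unique (hP'.2 x)).le)
    (le_of_reApplyInnerSelf_le hP'.1.1 hP.1.1 fun x => ((hP'.2 x).unique (hP.2 x)).le)

theorem IsParallelSum.exists_lt (hP : IsParallelSum X G P) {h : E} {ε : ℝ}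
    (hε : P.reApplyInnerSelf h < ε) :
    ∃ f g, f + g = h ∧ X.reApplyInnerSelf f + G.reApplyInnerSelf g < ε := by
  obtain ⟨_, ⟨f, g, hfg, rfl⟩, -, hlt⟩ := (hP.2 h).exists_between hε
  exact ⟨f, g, hfg, hlt⟩

theorem isParallelSum_zero_iff (hX : X.IsPositive) (hG : G.IsPositive) :
    IsParallelSum X G 0 ↔ ∀ h : E, ∀ ε > 0,
      ∃ f g, f + g = h ∧ X.reApplyInnerSelf f + G.reApplyInnerSelf g < ε := by
  refine ⟨fun h0 h ε hε => h0.exists_lt (by simpa [reApplyInnerSelf_apply] using hε),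
    fun H0 => ⟨isPositive_zero, fun h => ⟨?_, fun b hb => ?_⟩⟩⟩
  · rintro _ ⟨f, g, -, rfl⟩
    simpa [reApplyInnerSelf_apply] using add_nonneg (hX.2 f) (hG.2 g)
  · by_contra! hb0
    obtain ⟨f, g, hfg, hlt⟩ := H0 h b (by simpa using hb0)
    exact hlt.not_ge (hb ⟨f, g, hfg, rfl⟩)

theorem IsSqrtOf.reApplyInnerSelf_eq (hS : IsSqrtOf S X) (x : E) :
    X.reApplyInnerSelf x = ‖S x‖ ^ 2 := by
  rw [← hS.2, reApplyInnerSelf_apply, mul_apply_eq_comp, hS.1.inner_left_eq_inner_right,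
    inner_self_eq_norm_sq]

theorem IsSqrtOf.isPositive (hS : IsSqrtOf S X) : X.IsPositive := by
  refine ⟨fun x y => ?_, fun x => hS.reApplyInnerSelf_eq x ▸ sq_nonneg _⟩
  rw [← hS.2]
  change inner ℂ (S (S x)) y = inner ℂ x (S (S y))
  rw [hS.1.inner_left_eq_inner_right, hS.1.inner_left_eq_inner_right]

theorem isParallelSum_zero_iff_range_inter_range [CompleteSpace E] {Sx Sg : E →L[ℂ] E}
    (hSx : IsSqrtOf Sx X) (hSg : IsSqrtOf Sg G) :
    IsParallelSum X G 0 ↔ Set.range Sx ∩ Set.range Sg = {0} := by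
  simp only [isParallelSum_zero_iff hSx.isPositive hSg.isPositive, hSx.reApplyInnerSelf_eq,
    hSg.reApplyInnerSelf_eq]
  exact ⟨range_inter_range_eq_zero_of_forall_exists_lt hSx.1.1 hSg.1.1,
    fun hr h _ => exists_add_eq_and_norm_sq_add_norm_sq_lt hSx.1.1 hSg.1.1 hr h⟩

end ParallelSum

section Orbit

open ContinuousLinearMap

variable {E : Type*} [NormedAddCommGroup E] [InnerProductSpace ℂ E]
  {G X L : E →L[ℂ] E} {F : ℕ → E →L[ℂ] E}

theorem IsMuOrbit.eq {F' : ℕ → E →L[ℂ] E} (hF : IsMuOrbit G F) (hF' : IsMuOrbit G F')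
    (h0 : F 0 = F' 0) : F = F' := by
  funext n
  induction n with
  | zero => exact h0
  | succ n ih =>
    obtain ⟨P, hP, hFP⟩ := hF n
    obtain ⟨P', hP', hFP'⟩ := hF' n
    rw [ih] at hP
    rw [hFP, hFP', ih, hP.unique hP']

theorem isMuOrbit_const (hX : IsParallelSum X G 0) : IsMuOrbit G fun _ => X :=
  fun _ => ⟨0, hX, (sub_zero X).symm⟩

theorem IsMuOrbit.tail (hF : IsMuOrbit G F) : IsMuOrbit G fun n => F (n + 1) :=
  fun n => hF (n + 1)

theorem IsMuOrbit.isPositive (hF : IsMuOrbit G F) (h0 : (F 0).IsPositive) (n : ℕ) :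
    (F n).IsPositive := by
  induction n with
  | zero => exact h0
  | succ n ih =>
    obtain ⟨P, hP, hFP⟩ := hF n
    exact hFP ▸ hP.le ih.1

theorem IsMuOrbit.antitone (hF : IsMuOrbit G F) : Antitone F := by
  refine antitone_nat_of_succ_le fun n => ?_
  obtain ⟨P, hP, hFP⟩ := hF n
  show (F n - F (n + 1)).IsPositive
  rw [hFP, sub_sub_cancel]
  exact hP.1

theorem IsTau.unique {L' : E →L[ℂ] E} (hL : IsTau G X L) (hL' : IsTau G X L') : L = L' := by
  obtain ⟨F, hF0, hF, hlim⟩ := hL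
  obtain ⟨F', hF'0, hF', hlim'⟩ := hL'
  obtain rfl := hF.eq hF' (hF0.trans hF'0.symm)
  ext x
  exact tendsto_nhds_unique (hlim x) (hlim' x)

theorem isTau_self (hX : IsParallelSum X G 0) : IsTau G X X :=
  ⟨fun _ => X, rfl, isMuOrbit_const hX, fun _ => tendsto_const_nhds⟩

theorem IsTau.sub_parallelSum {P : E →L[ℂ] E} (hL : IsTau G X L) (hP : IsParallelSum X G P) :
    IsTau G (X - P) L := by
  obtain ⟨F, rfl, hF, hlim⟩ := hL
  obtain ⟨P', hP', hFP'⟩ := hF 0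
  exact ⟨fun n => F (n + 1), by rw [hP.unique hP']; exact hFP', hF.tail,
    fun x => (hlim x).comp (tendsto_add_atTop_nat 1)⟩

theorem IsTau.isPositive (hX : X.IsPositive) (hL : IsTau G X L) : L.IsPositive := by
  obtain ⟨F, rfl, hF, hlim⟩ := hL
  exact isPositive_of_tendsto (.of_forall (hF.isPositive hX)) hlim

theorem IsTau.le (hL : IsTau G X L) : L ≤ X := by
  obtain ⟨F, rfl, hF, hlim⟩ := hL
  exact le_of_antitone_of_tendsto hF.antitone hlim 0

theorem IsTau.isParallelSum_zero (hG : G.IsPositive) (hX : X.IsPositive) (hL : IsTau G X L) :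
    IsParallelSum L G 0 := by
  have hLpos := hL.isPositive hX
  obtain ⟨F, rfl, hF, hlim⟩ := hL
  have hLle : ∀ n, L ≤ F n := le_of_antitone_of_tendsto hF.antitone hlim
  choose P hP hFP using hF
  -- `P n = F n - F (n + 1)` is a difference of two sequences with the same limit.
  have hPlim : ∀ h, Tendsto (fun n => (P n).reApplyInnerSelf h) atTop (𝓝 0) := by
    intro h
    have hlim_h := tendsto_reApplyInnerSelf hlim h
    refine (sub_self (L.reApplyInnerSelf h) ▸
      hlim_h.sub (hlim_h.comp (tendsto_add_atTop_nat 1))).congr fun n => ?_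
    rw [Function.comp_apply, hFP, reApplyInnerSelf_sub, sub_sub_cancel]
  rw [isParallelSum_zero_iff hLpos hG]
  intro h ε hε
  obtain ⟨n, hn⟩ := ((hPlim h).eventually (gt_mem_nhds hε)).exists
  obtain ⟨f, g, hfg, hlt⟩ := (hP n).exists_lt hn
  exact ⟨f, g, hfg, lt_of_le_of_lt
    (add_le_add_left (reApplyInnerSelf_le_of_le (hLle n) f) _) hlt⟩

end Orbit

/-- Theorem 3, properties (1)–(4) of the paper. For every `X ∈ B⁺(H)`:
`τ_G(X) : G = 0`; `τ_G(X) ≤ X` with equality iff `ran X^{1/2} ∩ ran G^{1/2} = {0}`;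
`τ_G(τ_G(X)) = τ_G(X)`; and `τ_G(μ_G(X)) = τ_G(X)`. -/
theorem stmt13 (G X L : H →L[ℂ] H)
    (hG : G.IsPositive) (hX : X.IsPositive)
    (hL : IsTau G X L) :
    IsParallelSum L G 0 ∧
    (X - L).IsPositive ∧
    (∀ Sx Sg : H →L[ℂ] H, IsSqrtOf Sx X → IsSqrtOf Sg G →
      (L = X ↔ Set.range ⇑Sx ∩ Set.range ⇑Sg = {0})) ∧
    (∀ L' : H →L[ℂ] H, IsTau G L L' → L' = L) ∧
    (∀ P L' : H →L[ℂ] H, IsParallelSum X G P → IsTau G (X - P) L' → L' = L) := by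
  have hLG : IsParallelSum L G 0 := hL.isParallelSum_zero hG hX
  refine ⟨hLG, hL.le, fun Sx Sg hSx hSg => ?_,
    fun L' hL' => hL'.unique (isTau_self hLG),
    fun P L' hP hL' => hL'.unique (hL.sub_parallelSum hP)⟩
  rw [← isParallelSum_zero_iff_range_inter_range hSx hSg]
  exact ⟨fun hLX => hLX ▸ hLG, fun hXG => hL.unique (isTau_self hXG)⟩
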